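/- arXiv:1301.2859 — 5 statements merged into one kernel-verified Lean document; each statement's English description precedes it below -/
import Mathlib

section
/- Let n ≥ 1 and let 0 < θ_{1,n} < θ_{2,n} < … < θ_{n,n} be distinct positive reals. Set s_{j,k} = cosh((θ_{j,n}−θ_{k,n})/2) and t_{j,k} = cosh((θ_{j,n}+θ_{k,n})/2) for 1 ≤ j ≤ k ≤ n. Then the set of points {(s_{j,k}, t_{j,k}), (t_{j,k}, s_{j,k}), (−s_{j,k}, −t_{j,k}), (−t_{j,k}, −s_{j,k}) : 1 ≤ j ≤ k ≤ n} ⊂ ℝ² has exactly 2n² + 2n elements, which equals dim Π²_{2n−1} + n = n(2n+1) + n, i.e., the Möller lower bound dim Π²_{N−1} + ⌊N/2⌋ for a cubature rule of degree 2N−1 with N = 2n. -/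
private lemma cosh_inj_abs {x y : ℝ} (h : Real.cosh x = Real.cosh y) : |x| = |y| := by
  have h1 := Real.cosh_le_cosh.mp h.le
  have h2 := Real.cosh_le_cosh.mp h.ge
  linarith

private def quadPt (s t : ℝ) : Fin 4 → ℝ × ℝ := ![(s, t), (t, s), (-s, -t), (-t, -s)]

private lemma quad_inj {s t s' t' : ℝ} (h1 : 1 ≤ s) (h2 : s < t) (h3 : 1 ≤ s') (h4 : s' < t')
    {i i' : Fin 4} (heq : quadPt s t i = quadPt s' t' i') : s = s' ∧ t = t' ∧ i = i' := by
  fin_cases i <;> fin_cases i' <;>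
    · simp [quadPt, Prod.ext_iff] at heq
      obtain ⟨e1, e2⟩ := heq
      first
        | exact ⟨by linarith, by linarith, rfl⟩
        | (exfalso; linarith)

/-- The number of nodes of the minimal cubature rule of degree `4n-1`:
the points `(±s_{j,k}, ±t_{j,k})`, `(±t_{j,k}, ±s_{j,k})` for `1 ≤ j ≤ k ≤ n` are
`2n² + 2n` in number, which equals `dim Π²_{2n-1} + n = n(2n+1) + n`,
the Möller lower bound for a cubature rule of degree `2N-1` with `N = 2n`. -/
theorem stmt2 (n : ℕ) (hn : 1 ≤ n) (θ : Fin n → ℝ)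
    (hθ_pos : ∀ k, 0 < θ k) (hθ_mono : StrictMono θ) :
    ({p : ℝ × ℝ | ∃ j k : Fin n, j ≤ k ∧
        (p = (Real.cosh ((θ j - θ k) / 2), Real.cosh ((θ j + θ k) / 2)) ∨
         p = (Real.cosh ((θ j + θ k) / 2), Real.cosh ((θ j - θ k) / 2)) ∨
         p = (-Real.cosh ((θ j - θ k) / 2), -Real.cosh ((θ j + θ k) / 2)) ∨
         p = (-Real.cosh ((θ j + θ k) / 2), -Real.cosh ((θ j - θ k) / 2)))}).ncard
      = 2 * n ^ 2 + 2 * n ∧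
    2 * n ^ 2 + 2 * n = (2 * n - 1 + 1) * (2 * n - 1 + 2) / 2 + n ∧
    2 * n ^ 2 + 2 * n = n * (2 * n + 1) + n := by
  -- s < t for j ≤ k
  have hst : ∀ j k : Fin n, j ≤ k →
      Real.cosh ((θ j - θ k) / 2) < Real.cosh ((θ j + θ k) / 2) := by
    intro j k hjk
    rw [Real.cosh_lt_cosh]
    have h1 := hθ_pos j
    have h2 := hθ_pos k
    have h3 : θ j ≤ θ k := hθ_mono.le_iff_le.mpr hjk
    rw [abs_div, abs_div, abs_of_nonpos (by linarith : θ j - θ k ≤ 0),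
      abs_of_pos (by linarith : (0:ℝ) < θ j + θ k), abs_of_pos (by norm_num : (0:ℝ) < 2)]
    linarith
  set g : (Fin n × Fin n) × Fin 4 → ℝ × ℝ := fun q =>
    quadPt (Real.cosh ((θ q.1.1 - θ q.1.2) / 2)) (Real.cosh ((θ q.1.1 + θ q.1.2) / 2)) q.2
    with hg
  set S : Finset ((Fin n × Fin n) × Fin 4) :=
    (Finset.univ.filter (fun p : Fin n × Fin n => p.1 ≤ p.2)) ×ˢ Finset.univ with hS
  have hset : {p : ℝ × ℝ | ∃ j k : Fin n, j ≤ k ∧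
        (p = (Real.cosh ((θ j - θ k) / 2), Real.cosh ((θ j + θ k) / 2)) ∨
         p = (Real.cosh ((θ j + θ k) / 2), Real.cosh ((θ j - θ k) / 2)) ∨
         p = (-Real.cosh ((θ j - θ k) / 2), -Real.cosh ((θ j + θ k) / 2)) ∨
         p = (-Real.cosh ((θ j + θ k) / 2), -Real.cosh ((θ j - θ k) / 2)))}
      = ↑(S.image g) := by
    ext p
    simp only [Set.mem_setOf_eq, Finset.coe_image, Set.mem_image, Finset.mem_coe,
      Finset.mem_product, Finset.mem_filter, Finset.mem_univ, true_and, and_true, hS]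
    constructor
    · rintro ⟨j, k, hjk, h | h | h | h⟩
      · exact ⟨((j, k), 0), hjk, by simp [hg, quadPt, h]⟩
      · exact ⟨((j, k), 1), hjk, by simp [hg, quadPt, h]⟩
      · exact ⟨((j, k), 2), hjk, by simp [hg, quadPt, h]⟩
      · exact ⟨((j, k), 3), hjk, by simp [hg, quadPt, h]⟩
    · rintro ⟨⟨⟨j, k⟩, i⟩, hjk, rfl⟩
      refine ⟨j, k, hjk, ?_⟩
      fin_cases i <;> simp [hg, quadPt]
  -- injectivity on S
  have hinj : Set.InjOn g ↑S := by
    rintro ⟨⟨j, k⟩, i⟩ hm ⟨⟨j', k'⟩, i'⟩ hm' heq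
    simp only [hS, Finset.coe_product, Set.mem_prod, Finset.mem_coe, Finset.mem_filter,
      Finset.mem_univ, true_and, and_true] at hm hm'
    obtain ⟨e1, e2, e3⟩ := quad_inj (Real.one_le_cosh _) (hst j k hm)
      (Real.one_le_cosh _) (hst j' k' hm') heq
    have a1 : |θ j - θ k| = |θ j' - θ k'| := by
      have h := cosh_inj_abs e1
      rw [abs_div, abs_div, abs_of_pos (by norm_num : (0:ℝ) < 2)] at h
      linarith
    have a2 : θ j + θ k = θ j' + θ k' := by
      have h := cosh_inj_abs e2
      rw [abs_div, abs_div, abs_of_pos (by norm_num : (0:ℝ) < 2),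
        abs_of_pos (by have := hθ_pos j; have := hθ_pos k; positivity),
        abs_of_pos (by have := hθ_pos j'; have := hθ_pos k'; positivity)] at h
      linarith
    have hj3 : θ j ≤ θ k := hθ_mono.le_iff_le.mpr hm
    have hj4 : θ j' ≤ θ k' := hθ_mono.le_iff_le.mpr hm'
    rw [abs_of_nonpos (by linarith), abs_of_nonpos (by linarith)] at a1
    have ej : j = j' := hθ_mono.injective (by linarith)
    have ek : k = k' := hθ_mono.injective (by linarith)
    subst ej; subst ek; exact Prod.ext rfl e3
  -- cardinality of S
  have hScard : 2 * S.card = (n ^ 2 + n) * 4 := by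
    rw [hS, Finset.card_product]
    have hsw : (Finset.univ.filter (fun p : Fin n × Fin n => p.2 ≤ p.1)).card
        = (Finset.univ.filter (fun p : Fin n × Fin n => p.1 ≤ p.2)).card := by
      rw [← Finset.card_image_of_injective _ (Prod.swap_injective (α := Fin n) (β := Fin n))]
      congr 1
      ext ⟨a, b⟩
      simp only [Finset.mem_image, Finset.mem_filter, Finset.mem_univ, true_and, Prod.exists,
        Prod.swap_prod_mk, Prod.mk.injEq]
      constructor
      · rintro ⟨x, y, h, rfl, rfl⟩; exact h
      · intro h; exact ⟨b, a, h, rfl, rfl⟩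
    have hui := Finset.card_filter_add_card_filter_not
      (s := (Finset.univ : Finset (Fin n × Fin n)))
      (p := fun p : Fin n × Fin n => p.1 < p.2)
    have hlt : (Finset.univ.filter (fun p : Fin n × Fin n => p.1 ≤ p.2)).card
        = (Finset.univ.filter (fun p : Fin n × Fin n => p.1 < p.2)).card + n := by
      have hdiag : ((Finset.univ : Finset (Fin n)).image (fun a => (a, a))).card = n := by
        rw [Finset.card_image_of_injective _ (fun a b (h : (a,a) = (b,b)) =>
          congrArg Prod.fst h)]
        simp
      have hdisj : Disjoint (Finset.univ.filter (fun p : Fin n × Fin n => p.1 < p.2))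
          ((Finset.univ : Finset (Fin n)).image (fun a => (a, a))) := by
        rw [Finset.disjoint_left]
        rintro ⟨a, b⟩ h h2
        simp only [Finset.mem_filter, Finset.mem_univ, true_and] at h
        simp only [Finset.mem_image] at h2
        obtain ⟨x, -, hx⟩ := h2
        injection hx with h1 h2
        subst h1; subst h2
        exact lt_irrefl _ h
      have hun : (Finset.univ.filter (fun p : Fin n × Fin n => p.1 ≤ p.2))
          = (Finset.univ.filter (fun p : Fin n × Fin n => p.1 < p.2))
            ∪ ((Finset.univ : Finset (Fin n)).image (fun a => (a, a))) := by
        ext ⟨a, b⟩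
        simp only [Finset.mem_filter, Finset.mem_univ, true_and, Finset.mem_union,
          Finset.mem_image, Prod.mk.injEq, exists_eq_left]
        exact le_iff_lt_or_eq
      rw [hun, Finset.card_union_of_disjoint hdisj, hdiag]
    have hneg : (Finset.univ.filter (fun p : Fin n × Fin n => ¬ p.1 < p.2)).card
        = (Finset.univ.filter (fun p : Fin n × Fin n => p.2 ≤ p.1)).card := by
      congr 1
      ext p
      simp [not_lt]
    have hcu : (Finset.univ : Finset (Fin n × Fin n)).card = n * n := by simp
    have key : (Finset.univ.filter (fun p : Fin n × Fin n => p.1 < p.2)).card +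
        (Finset.univ.filter (fun p : Fin n × Fin n => p.1 ≤ p.2)).card = n * n := by
      rw [← hsw, ← hneg, ← hcu]; exact hui
    have hf4 : (Finset.univ : Finset (Fin 4)).card = 4 := by simp
    rw [hf4]
    nlinarith [hlt, key]
  refine ⟨?_, ?_, by ring⟩
  · rw [hset, Set.ncard_coe_finset, Finset.card_image_of_injOn hinj]
    omega
  · have h1 : (2 * n - 1 + 1) = 2 * n := by omega
    have h1' : (2 * n - 1 + 2) = 2 * n + 1 := by omega
    rw [h1, h1', mul_assoc, Nat.mul_div_cancel_left _ (by norm_num : 0 < 2)]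
    ring
end

section
/- Let w be a nonnegative integrable weight on [1,∞) with finite moments, let p_m be orthogonal polynomials for w (deg p_m = m, ∫₁^∞ p_m q w = 0 for deg q < m), let x_{1,n} < … < x_{n,n} in (1,∞) be the zeros of p_n, define θ_{j,n} ≥ 0 by x_{j,n} = cosh θ_{j,n}, and set s_{j,l} = cosh((θ_{j,n}−θ_{l,n})/2), t_{j,l} = cosh((θ_{j,n}+θ_{l,n})/2). For 0 ≤ k ≤ n let P_{k,n}^{(−1/2)} be the unique bivariate polynomial with P_{k,n}^{(−1/2)}(x+y, xy) = p_n(x)p_k(y) + p_k(x)p_n(y), and set ₁Q_{k,2n}^{(−1/2)}(x,y) := P_{k,n}^{(−1/2)}(2xy, x²+y²−1). Then for every 0 ≤ k ≤ n, every 1 ≤ j ≤ l ≤ n, the polynomial ₁Q_{k,2n}^{(−1/2)} vanishes at all four points (s_{j,l}, t_{j,l}), (t_{j,l}, s_{j,l}), (−s_{j,l}, −t_{j,l}), (−t_{j,l}, −s_{j,l}); i.e., the nodes of the minimal cubature rule of degree 4n−1 for 𝒲_{−1/2} are common zeros of the n+1 orthogonal polynomials ₁Q_{k,2n}^{(−1/2)},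 0 ≤ k ≤ n. -/
open MeasureTheory

/-- The polynomial map `(x,y) ↦ (2xy, x² + y² - 1)`. -/
noncomputable def Phi : Fin 2 → MvPolynomial (Fin 2) ℝ :=
  ![2 * MvPolynomial.X 0 * MvPolynomial.X 1,
    MvPolynomial.X 0 ^ 2 + MvPolynomial.X 1 ^ 2 - 1]

lemma eval_bind_Phi (P : MvPolynomial (Fin 2) ℝ) (a b : ℝ) :
    MvPolynomial.eval ![a, b] (MvPolynomial.bind₁ Phi P) =
      MvPolynomial.eval ![2 * a * b, a ^ 2 + b ^ 2 - 1] P := by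
  rw [MvPolynomial.eval, MvPolynomial.eval₂Hom_bind₁]
  apply MvPolynomial.eval₂Hom_congr rfl _ rfl
  funext i
  fin_cases i <;> simp [Phi]

lemma cosh_sum (u v : ℝ) :
    2 * Real.cosh ((u - v) / 2) * Real.cosh ((u + v) / 2) =
      Real.cosh u + Real.cosh v := by
  have h1 : u = (u - v) / 2 + (u + v) / 2 := by ring
  have h2 : v = (u + v) / 2 - (u - v) / 2 := by ring
  rw [h1, h2, Real.cosh_add, Real.cosh_sub]
  ring

lemma cosh_prod (u v : ℝ) :
    Real.cosh ((u - v) / 2) ^ 2 + Real.cosh ((u + v) / 2) ^ 2 - 1 =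
      Real.cosh u * Real.cosh v := by
  have hu : Real.cosh u = Real.cosh ((u - v) / 2) * Real.cosh ((u + v) / 2) +
      Real.sinh ((u - v) / 2) * Real.sinh ((u + v) / 2) := by
    rw [← Real.cosh_add]; ring_nf
  have hv : Real.cosh v = Real.cosh ((u + v) / 2) * Real.cosh ((u - v) / 2) -
      Real.sinh ((u + v) / 2) * Real.sinh ((u - v) / 2) := by
    rw [← Real.cosh_sub]; ring_nf
  have e1 := Real.cosh_sq ((u - v) / 2)
  have e2 := Real.cosh_sq ((u + v) / 2)
  rw [hu, hv]
  nlinarith [e1, e2]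

/-- The nodes of the minimal cubature rule of degree `4n-1` for `𝒲_{-1/2}` are
common zeros of the `n+1` orthogonal polynomials
`₁Q_{k,2n}^{(-1/2)}(x,y) = P_{k,n}^{(-1/2)}(2xy, x²+y²-1)`, `0 ≤ k ≤ n`. -/
theorem stmt10 (w : ℝ → ℝ)
    (hw_nn : ∀ x ∈ Set.Ici (1 : ℝ), 0 ≤ w x)
    (hw_int : IntegrableOn w (Set.Ici 1))
    (hw_mom : ∀ m : ℕ, IntegrableOn (fun x => x ^ m * w x) (Set.Ici 1))
    (p : ℕ → Polynomial ℝ)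
    (hp_deg : ∀ m, (p m).degree = m)
    (hp_orth : ∀ m (q : Polynomial ℝ), q.natDegree < m →
      ∫ t in Set.Ici (1 : ℝ), (p m).eval t * q.eval t * w t = 0)
    (n : ℕ) (hn : 1 ≤ n)
    (x θ : Fin n → ℝ)
    (hx_mono : StrictMono x) (hx_gt : ∀ j, 1 < x j)
    (hx_root : ∀ j, (p n).eval (x j) = 0)
    (hθ_nn : ∀ j, 0 ≤ θ j) (hθ : ∀ j, x j = Real.cosh (θ j)) :
    ∀ k : ℕ, k ≤ n → ∀ P : MvPolynomial (Fin 2) ℝ,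
      (∀ a b : ℝ, MvPolynomial.eval ![a + b, a * b] P =
        (p n).eval a * (p k).eval b + (p k).eval a * (p n).eval b) →
      ∀ j l : Fin n, j ≤ l →
        MvPolynomial.eval
            ![Real.cosh ((θ j - θ l) / 2), Real.cosh ((θ j + θ l) / 2)]
            (MvPolynomial.bind₁ Phi P) = 0 ∧
        MvPolynomial.eval
            ![Real.cosh ((θ j + θ l) / 2), Real.cosh ((θ j - θ l) / 2)]
            (MvPolynomial.bind₁ Phi P) = 0 ∧
        MvPolynomial.eval
            ![-Real.cosh ((θ j - θ l) / 2), -Real.cosh ((θ j + θ l) / 2)]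
            (MvPolynomial.bind₁ Phi P) = 0 ∧
        MvPolynomial.eval
            ![-Real.cosh ((θ j + θ l) / 2), -Real.cosh ((θ j - θ l) / 2)]
            (MvPolynomial.bind₁ Phi P) = 0 := by
  intro k hk P hP j l hjl
  have key : ∀ a b : ℝ, 2 * a * b = x j + x l → a ^ 2 + b ^ 2 - 1 = x j * x l →
      MvPolynomial.eval ![a, b] (MvPolynomial.bind₁ Phi P) = 0 := by
    intro a b h1 h2
    rw [eval_bind_Phi, h1, h2, hP, hx_root j, hx_root l]
    ring
  have hs := cosh_sum (θ j) (θ l)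
  have hp2 := cosh_prod (θ j) (θ l)
  rw [← hθ j, ← hθ l] at hs hp2
  refine ⟨key _ _ hs hp2, key _ _ (by linarith) (by linarith),
    key _ _ (by linarith) (by linarith), key _ _ (by linarith) (by linarith)⟩
end

section
/- Let n ≥ 1 and let x_{1,n} < x_{2,n} < … < x_{n,n} be distinct reals in (1,∞) (the zeros of the n-th orthogonal polynomial p_n for a weight w on [1,∞)). Then: (a) the points (x_{j,n}+x_{k,n}, x_{j,n}x_{k,n}) for 1 ≤ j ≤ k ≤ n are pairwise distinct, so their set has cardinality n(n+1)/2 = dim Π²_{n−1}; and (b) if p_m are orthogonal polynomials for w and P_{k,n}^{(−1/2)} is the bivariate polynomial with P_{k,n}^{(−1/2)}(x+y, xy) = p_n(x)p_k(y) + p_k(x)p_n(y), then every such point is a common zero of P_{k,n}^{(−1/2)} for all 0 ≤ k ≤ n. -/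
open MeasureTheory

lemma gauss_sum_aux (n : ℕ) : ∑ i ∈ Finset.range n, (i + 1) = n*(n+1)/2 := by
  induction n with
  | zero => simp
  | succ m ih =>
    rw [Finset.sum_range_succ, ih]
    have h1 : m*(m+1) + 2*(m+1) = (m+1)*(m+1+1) := by ring
    omega

lemma count_pairs_aux (n : ℕ) :
    (Finset.univ.filter (fun q : Fin n × Fin n => q.1 ≤ q.2)).card = n*(n+1)/2 := by
  have h1 : (Finset.univ.filter (fun q : Fin n × Fin n => q.1 ≤ q.2)).card
      = ∑ l : Fin n, ((l : ℕ) + 1) := by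
    rw [Finset.card_filter, ← Finset.univ_product_univ, Finset.sum_product_right]
    congr 1; ext l
    have h0 : (∑ x : Fin n, if (x, l).1 ≤ (x, l).2 then 1 else 0)
        = (Finset.univ.filter (fun j : Fin n => j ≤ l)).card :=
      (Finset.card_filter _ _).symm
    have h2 : Finset.univ.filter (fun j : Fin n => j ≤ l) = Finset.Iic l := by
      ext j; simp
    rw [h0, h2, Fin.card_Iic]
  rw [h1, Fin.sum_univ_eq_sum_range (fun i => (i : ℕ) + 1) n, gauss_sum_aux]

lemma pairdet_aux {a b c d : ℝ} (hab : a ≤ b) (hcd : c ≤ d)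
    (hs : a + b = c + d) (hp : a * b = c * d) : a = c ∧ b = d := by
  have h : (a - b)^2 = (c - d)^2 := by
    calc (a-b)^2 = (a+b)^2 - 4*(a*b) := by ring
    _ = (c+d)^2 - 4*(c*d) := by rw [hs, hp]
    _ = (c-d)^2 := by ring
  have h2 : a - b = c - d ∨ a - b = -(c - d) := sq_eq_sq_iff_eq_or_eq_neg.mp h
  rcases h2 with h2 | h2 <;> constructor <;> linarith

/-- (a) The points `(x_{j,n} + x_{k,n}, x_{j,n} x_{k,n})`, `1 ≤ j ≤ k ≤ n`, are pairwise
distinct, so they number `n(n+1)/2 = dim Π²_{n-1}`; (b) each is a common zero of the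
orthogonal polynomials `P_{k,n}^{(-1/2)}`, `0 ≤ k ≤ n`. -/
theorem stmt15 (w : ℝ → ℝ)
    (hw_nn : ∀ x ∈ Set.Ici (1 : ℝ), 0 ≤ w x)
    (hw_int : IntegrableOn w (Set.Ici 1))
    (hw_mom : ∀ m : ℕ, IntegrableOn (fun x => x ^ m * w x) (Set.Ici 1))
    (p : ℕ → Polynomial ℝ)
    (hp_deg : ∀ m, (p m).degree = m)
    (hp_orth : ∀ m (q : Polynomial ℝ), q.natDegree < m →
      ∫ t in Set.Ici (1 : ℝ), (p m).eval t * q.eval t * w t = 0)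
    (n : ℕ) (hn : 1 ≤ n)
    (x : Fin n → ℝ)
    (hx_mono : StrictMono x) (hx_gt : ∀ j, 1 < x j)
    (hx_root : ∀ j, (p n).eval (x j) = 0) :
    (Set.InjOn (fun q : Fin n × Fin n => (x q.1 + x q.2, x q.1 * x q.2))
        {q | q.1 ≤ q.2} ∧
      ({z : ℝ × ℝ | ∃ j k : Fin n, j ≤ k ∧ z = (x j + x k, x j * x k)}).ncard
        = n * (n + 1) / 2 ∧
      n * (n + 1) / 2 = (n - 1 + 1) * (n - 1 + 2) / 2) ∧
    (∀ k : ℕ, k ≤ n → ∀ P : MvPolynomial (Fin 2) ℝ,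
      (∀ a b : ℝ, MvPolynomial.eval ![a + b, a * b] P =
        (p n).eval a * (p k).eval b + (p k).eval a * (p n).eval b) →
      ∀ j l : Fin n, j ≤ l →
        MvPolynomial.eval ![x j + x l, x j * x l] P = 0) := by
  have hinj : Set.InjOn (fun q : Fin n × Fin n => (x q.1 + x q.2, x q.1 * x q.2))
      {q | q.1 ≤ q.2} := by
    intro q hq q' hq' heq
    have hq1 : x q.1 ≤ x q.2 := hx_mono.monotone hq
    have hq2 : x q'.1 ≤ x q'.2 := hx_mono.monotone hq'
    have hsum : x q.1 + x q.2 = x q'.1 + x q'.2 := congrArg Prod.fst heq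
    have hprod : x q.1 * x q.2 = x q'.1 * x q'.2 := congrArg Prod.snd heq
    obtain ⟨h1, h2⟩ := pairdet_aux hq1 hq2 hsum hprod
    exact Prod.ext (hx_mono.injective h1) (hx_mono.injective h2)
  have heq3 : n * (n + 1) / 2 = (n - 1 + 1) * (n - 1 + 2) / 2 := by
    have h1 : n - 1 + 1 = n := by omega
    have h2 : n - 1 + 2 = n + 1 := by omega
    rw [h1, h2]
  refine ⟨⟨hinj, ?_, heq3⟩, ?_⟩
  · have hS : {z : ℝ × ℝ | ∃ j k : Fin n, j ≤ k ∧ z = (x j + x k, x j * x k)}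
        = (fun q : Fin n × Fin n => (x q.1 + x q.2, x q.1 * x q.2)) ''
          {q | q.1 ≤ q.2} := by
      ext z
      constructor
      · rintro ⟨j, k, hjk, rfl⟩
        exact ⟨(j, k), hjk, rfl⟩
      · rintro ⟨⟨j, k⟩, hjk, rfl⟩
        exact ⟨j, k, hjk, rfl⟩
    rw [hS, Set.ncard_image_of_injOn hinj]
    have hT : {q : Fin n × Fin n | q.1 ≤ q.2}
        = ↑(Finset.univ.filter (fun q : Fin n × Fin n => q.1 ≤ q.2)) := by
      ext q; simp
    rw [hT, Set.ncard_coe_finset, count_pairs_aux]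
  · intro k hk P hP j l hjl
    rw [hP (x j) (x l), hx_root j, hx_root l]
    ring
end

section
/- Let W be a nonnegative weight function on a domain Ω ⊂ ℝ² with finite moments of all orders and positive-definite moment functional (∫_Ω p² W > 0 for every nonzero polynomial p), and let n ≥ 1. Let {P_{k,n} : 0 ≤ k ≤ n} be a basis of 𝒱_n², the (n+1)-dimensional space of orthogonal polynomials of degree n with respect to W. Then there exist N = n(n+1)/2 = dim Π²_{n−1} points (x_k,y_k) ∈ ℝ² and weights λ_k such that ∫_Ω f W = Σ_{k=1}^N λ_k f(x_k,y_k) for all f ∈ Π²_{2n−1} (a Gaussian cubature rule of degree 2n−1) if and only if the polynomials P_{0,n},…,P_{n,n} have n(n+1)/2 common zeros in ℝ², and in that case the nodes of the cubature rule are exactly these common zeros. -/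
/-!
Write `Π_m` for the polynomials of total degree `≤ m`, `n = m + 1` and `L f = ∫_Ω f W`.
As `L (p * p) ≠ 0` for `p ≠ 0`, no nonzero combination of the `P_k` lies in `Π_m`, so counting
dimensions gives `Π_{m+1} = span {P_k} ⊕ Π_m`. Multiplying by variables and inducting on the degree,
every `f ∈ Π_{m+1+d}` is then `∑ q_k P_k + r` with `deg q_k ≤ d` and `deg r ≤ m`.

At distinct common zeros of the `P_k` such an `f` takes the values of `r`, so every interpolation
problem on them is solvable in `Π_m`: there are at most `N = dim Π_m` common zeros, and if there are
exactly `N`, evaluation `Π_m → ℝ^N` is an isomorphism. The interpolatory weights are exact on `Π_m`,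
hence on `Π_{2m+1}`, since `L` and the rule both vanish on `∑ q_k P_k`.

Conversely, if a rule with `N` nodes is exact on `Π_{2m+1}`, then `L (r * r) = ∑ λ_i r(x_i)²` makes
evaluation at the nodes injective on `Π_m`, so Lagrange polynomials `ℓ_i ∈ Π_m` exist,
`λ_i = L (ℓ_i * ℓ_i) ≠ 0` and `0 = L (P_k * ℓ_i) = λ_i P_k(x_i)`. By the bound above there are no
other common zeros.
-/

open MeasureTheory Module Finset

namespace MvPolynomial

section Degree

variable {σ R : Type*} [CommSemiring R]

lemma restrictTotalDegree_mono {d d' : ℕ} (h : d ≤ d') :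
    restrictTotalDegree σ R d ≤ restrictTotalDegree σ R d' := fun p hp => by
  rw [mem_restrictTotalDegree] at hp ⊢
  exact hp.trans h

lemma mul_mem_restrictTotalDegree {a b : ℕ} {p q : MvPolynomial σ R}
    (hp : p ∈ restrictTotalDegree σ R a) (hq : q ∈ restrictTotalDegree σ R b) :
    p * q ∈ restrictTotalDegree σ R (a + b) := by
  rw [mem_restrictTotalDegree] at hp hq ⊢
  exact (totalDegree_mul p q).trans (add_le_add hp hq)

lemma X_mul_mem_restrictTotalDegree {d : ℕ} (j : σ) {p : MvPolynomial σ R}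
    (hp : p ∈ restrictTotalDegree σ R d) : X j * p ∈ restrictTotalDegree σ R (d + 1) := by
  have hX : X j ∈ restrictTotalDegree σ R 1 := by
    simpa [mem_restrictTotalDegree, X] using totalDegree_monomial_le (Finsupp.single j 1) (1 : R)
  simpa [add_comm] using mul_mem_restrictTotalDegree hX hp

theorem finrank_restrictTotalDegree [Fintype σ] {R : Type*} [CommRing R] [Nontrivial R] (m : ℕ) :
    finrank R (restrictTotalDegree σ R m) =
      ∑ k ∈ range (m + 1), (Fintype.card σ).multichoose k := by
  classical
  have hsupport : {s : σ →₀ ℕ | (s.sum fun _ e => e) ≤ m} =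
      ↑((range (m + 1)).biUnion fun k => (univ : Finset σ).finsuppAntidiag k) := by
    ext s
    simp [Finsupp.sum_fintype]
  rw [restrictTotalDegree, finrank_eq_nat_card_basis (basisRestrictSupport R _), hsupport,
    Nat.card_coe_set_eq, Set.ncard_coe_finset, card_biUnion]
  · simp [card_finsuppAntidiag_nat_eq_multichoose]
  · intro i _ j _ hij
    simp only [Function.onFun, disjoint_left, mem_finsuppAntidiag]
    grind

theorem finrank_restrictTotalDegree_fin_two {R : Type*} [CommRing R] [Nontrivial R] (m : ℕ) :
    finrank R (restrictTotalDegree (Fin 2) R m) = (m + 1) * (m + 2) / 2 := by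
  rw [finrank_restrictTotalDegree, Fintype.card_fin]
  simp only [Nat.multichoose_two]
  have hshift := sum_range_succ' (fun k => k) (m + 1)
  have hgauss : (∑ k ∈ range (m + 1 + 1), k) * 2 = (m + 1) * (m + 2) := by
    rw [sum_range_id_mul_two, Nat.add_sub_cancel, mul_comm]
  omega

end Degree

section Decomposition

variable {σ ι R : Type*} [CommSemiring R] [Fintype ι]

def sumMulAdd (P : ι → MvPolynomial σ R) (d m : ℕ) : Submodule R (MvPolynomial σ R) where
  carrier := {f | ∃ q : ι → MvPolynomial σ R, ∃ r, (∀ k, q k ∈ restrictTotalDegree σ R d) ∧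
    r ∈ restrictTotalDegree σ R m ∧ f = ∑ k, q k * P k + r}
  zero_mem' := ⟨0, 0, fun _ => zero_mem _, zero_mem _, by simp⟩
  add_mem' := by
    rintro _ _ ⟨q, r, hq, hr, rfl⟩ ⟨q', r', hq', hr', rfl⟩
    refine ⟨q + q', r + r', fun k => add_mem (hq k) (hq' k), add_mem hr hr', ?_⟩
    simp only [Pi.add_apply, add_mul, sum_add_distrib]
    abel
  smul_mem' := by
    rintro c _ ⟨q, r, hq, hr, rfl⟩
    refine ⟨c • q, c • r, fun k => Submodule.smul_mem _ c (hq k), Submodule.smul_mem _ c hr, ?_⟩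
    simp [smul_add, smul_sum]

variable {P : ι → MvPolynomial σ R} {m : ℕ}

lemma sumMulAdd_mono {d d' : ℕ} (h : d ≤ d') : sumMulAdd P d m ≤ sumMulAdd P d' m := by
  rintro _ ⟨q, r, hq, hr, rfl⟩
  exact ⟨q, r, fun k => restrictTotalDegree_mono h (hq k), hr, rfl⟩

lemma restrictTotalDegree_le_sumMulAdd_zero
    (hsup : restrictTotalDegree σ R (m + 1) ≤
      Submodule.span R (Set.range P) ⊔ restrictTotalDegree σ R m) :
    restrictTotalDegree σ R (m + 1) ≤ sumMulAdd P 0 m := by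
  intro f hf
  obtain ⟨_, hy, r, hr, rfl⟩ := Submodule.mem_sup.mp (hsup hf)
  obtain ⟨c, rfl⟩ := (Submodule.mem_span_range_iff_exists_fun R).mp hy
  refine ⟨fun k => C (c k), r, fun k => ?_, hr, by simp [smul_eq_C_mul]⟩
  simp [mem_restrictTotalDegree]

lemma X_mul_mem_sumMulAdd
    (hsup : restrictTotalDegree σ R (m + 1) ≤
      Submodule.span R (Set.range P) ⊔ restrictTotalDegree σ R m)
    {d : ℕ} (j : σ) {f : MvPolynomial σ R} (hf : f ∈ sumMulAdd P d m) :
    X j * f ∈ sumMulAdd P (d + 1) m := by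
  obtain ⟨q, r, hq, hr, rfl⟩ := hf
  have hXr : X j * r ∈ sumMulAdd P (d + 1) m :=
    sumMulAdd_mono (Nat.zero_le _) <|
      restrictTotalDegree_le_sumMulAdd_zero hsup <| X_mul_mem_restrictTotalDegree j hr
  have hXq : ∑ k, (X j * q k) * P k ∈ sumMulAdd P (d + 1) m :=
    ⟨fun k => X j * q k, 0, fun k => X_mul_mem_restrictTotalDegree j (hq k), zero_mem _,
      by simp⟩
  convert add_mem hXq hXr using 1
  simp [mul_add, mul_sum, mul_assoc]

theorem restrictTotalDegree_le_sumMulAdd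
    (hsup : restrictTotalDegree σ R (m + 1) ≤
      Submodule.span R (Set.range P) ⊔ restrictTotalDegree σ R m)
    (d : ℕ) : restrictTotalDegree σ R (m + 1 + d) ≤ sumMulAdd P d m := by
  induction d with
  | zero => exact restrictTotalDegree_le_sumMulAdd_zero hsup
  | succ d ih =>
    intro f hf
    rw [f.as_sum]
    refine Submodule.sum_mem _ fun s hs => ?_
    have hs_deg : s.degree ≤ m + 1 + (d + 1) :=
      (le_totalDegree hs).trans ((mem_restrictTotalDegree σ _ _).mp hf)
    by_cases hs_le : s.degree ≤ m + 1 + d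
    · exact sumMulAdd_mono d.le_succ
        (ih ((mem_restrictTotalDegree σ _ _).mpr ((totalDegree_monomial_le _ _).trans hs_le)))
    obtain ⟨j, hj⟩ := Finsupp.ne_iff.mp (show s ≠ 0 by rintro rfl; simp at hs_le)
    obtain ⟨t, rfl⟩ : ∃ t, s = Finsupp.single j 1 + t :=
      ⟨s - Finsupp.single j 1, (add_tsub_cancel_of_le (Finsupp.single_le_iff.mpr
        (Nat.one_le_iff_ne_zero.mpr hj))).symm⟩
    rw [monomial_single_add, pow_one]
    refine X_mul_mem_sumMulAdd hsup j
      (ih ((mem_restrictTotalDegree σ _ _).mpr ((totalDegree_monomial_le _ _).trans ?_)))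
    simp only [map_add, Finsupp.degree_single] at hs_deg
    change t.degree ≤ _
    omega

end Decomposition

section Interpolation

variable {σ ι K : Type*} [Field K]

theorem exists_eval_eq [Finite ι] {x : ι → σ → K} (hx : Function.Injective x) (v : ι → K) :
    ∃ f : MvPolynomial σ K, ∀ i, eval (x i) f = v i := by
  classical
  cases nonempty_fintype ι
  have separate : ∀ i j, i ≠ j → ∃ g : MvPolynomial σ K, eval (x i) g = 1 ∧ eval (x j) g = 0 := by
    intro i j hij
    obtain ⟨a, ha⟩ := Function.ne_iff.mp (hx.ne hij)
    refine ⟨C (x i a - x j a)⁻¹ * (X a - C (x j a)), ?_, by simp⟩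
    simp [inv_mul_cancel₀ (sub_ne_zero.mpr ha)]
  choose g hg_one hg_zero using separate
  refine ⟨∑ i, C (v i) * ∏ j : {j // i ≠ j}, g i j j.2, fun k => ?_⟩
  rw [map_sum, sum_eq_single k]
  · simp [hg_one]
  · intro i _ hik
    simp only [map_mul, eval_C, map_prod]
    rw [prod_eq_zero (mem_univ ⟨k, hik⟩) (hg_zero _ _ _), mul_zero]
  · simp

noncomputable def evalAt (x : ι → σ → K) : MvPolynomial σ K →ₗ[K] ι → K :=
  LinearMap.pi fun i => (aeval (x i)).toLinearMap

@[simp]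
lemma evalAt_apply (x : ι → σ → K) (f : MvPolynomial σ K) (i : ι) :
    evalAt x f i = eval (x i) f := rfl

end Interpolation

section Cubature

variable {σ ι κ K : Type*} [Fintype κ] [Field K] {L : MvPolynomial σ K →ₗ[K] K} {m : ℕ}
  {P : ι → MvPolynomial σ K}

def IsCubature (L : MvPolynomial σ K →ₗ[K] K) (d : ℕ) (x : κ → σ → K) (w : κ → K) : Prop :=
  ∀ f : MvPolynomial σ K, f.totalDegree ≤ d → L f = ∑ i, w i * eval (x i) f

theorem eval_eq_zero_of_isCubature [Finite σ] (hL : ∀ p, p ≠ 0 → L (p * p) ≠ 0)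
    (hPdeg : ∀ k, P k ∈ restrictTotalDegree σ K (m + 1))
    (hPorth : ∀ k, ∀ q ∈ restrictTotalDegree σ K m, L (P k * q) = 0)
    {x : κ → σ → K} {w : κ → K} (hN : finrank K (restrictTotalDegree σ K m) = Fintype.card κ)
    (hcub : IsCubature L (2 * m + 1) x w) (i : κ) (k : ι) : eval (x i) (P k) = 0 := by
  classical
  set E := (evalAt x).domRestrict (restrictTotalDegree σ K m)
  have hinj : Function.Injective E := by
    refine (injective_iff_map_eq_zero E).mpr fun ⟨r, hr⟩ hr_zero => ?_
    by_contra hr_ne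
    refine hL r (fun h => hr_ne (Subtype.ext h)) ?_
    rw [hcub _ (((mem_restrictTotalDegree σ _ _).mp (mul_mem_restrictTotalDegree hr hr)).trans
      (by omega))]
    have hr_eval : ∀ j, eval (x j) r = 0 := fun j => congrFun hr_zero j
    simp [hr_eval]
  obtain ⟨⟨ℓ, hℓ⟩, hℓ_eval⟩ :=
    (LinearMap.injective_iff_surjective_of_finrank_eq_finrank (by simp [hN])).mp hinj
      (Pi.single i 1)
  have hℓ_eval' : ∀ j, eval (x j) ℓ = Pi.single (M := fun _ => K) i 1 j :=
    fun j => congrFun hℓ_eval j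
  have hcub_ℓ : ∀ g ∈ restrictTotalDegree σ K (m + 1), L (g * ℓ) = w i * eval (x i) g := by
    intro g hg
    rw [hcub _ (((mem_restrictTotalDegree σ _ _).mp (mul_mem_restrictTotalDegree hg hℓ)).trans
      (by omega))]
    simp [hℓ_eval', Pi.single_apply]
  have hw : w i ≠ 0 := by
    intro hw
    refine hL ℓ (fun h => by simpa [h] using hℓ_eval' i) ?_
    rw [hcub_ℓ ℓ (restrictTotalDegree_mono m.le_succ hℓ), hw, zero_mul]
  have hPℓ := hcub_ℓ (P k) (hPdeg k)
  rw [hPorth k ℓ hℓ] at hPℓ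
  exact (mul_eq_zero.mp hPℓ.symm).resolve_left hw

variable [Fintype ι]

lemma span_range_inf_restrictTotalDegree_eq_bot (hL : ∀ p, p ≠ 0 → L (p * p) ≠ 0)
    (hPorth : ∀ k, ∀ q ∈ restrictTotalDegree σ K m, L (P k * q) = 0) :
    Submodule.span K (Set.range P) ⊓ restrictTotalDegree σ K m = ⊥ := by
  refine (Submodule.eq_bot_iff _).mpr fun p ⟨hp_span, hp_deg⟩ => ?_
  by_contra hp
  refine hL p hp ?_
  obtain ⟨c, rfl⟩ := (Submodule.mem_span_range_iff_exists_fun K).mp hp_span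
  simp [sum_mul, hPorth _ _ hp_deg]

theorem span_range_sup_restrictTotalDegree_eq [Fintype σ] (hL : ∀ p, p ≠ 0 → L (p * p) ≠ 0)
    (hPdeg : ∀ k, P k ∈ restrictTotalDegree σ K (m + 1))
    (hPorth : ∀ k, ∀ q ∈ restrictTotalDegree σ K m, L (P k * q) = 0)
    (hPli : LinearIndependent K P) (hcard : Fintype.card ι = (Fintype.card σ).multichoose (m + 1)) :
    Submodule.span K (Set.range P) ⊔ restrictTotalDegree σ K m =
      restrictTotalDegree σ K (m + 1) := by
  refine Submodule.eq_of_le_of_finrank_eq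
    (sup_le (Submodule.span_le.mpr (Set.range_subset_iff.mpr hPdeg))
      (restrictTotalDegree_mono m.le_succ)) ?_
  have := FiniteDimensional.span_of_finite K (Set.finite_range P)
  rw [finrank_restrictTotalDegree (R := K) (m + 1), sum_range_succ,
    ← finrank_restrictTotalDegree (σ := σ) (R := K) m, ← hcard, add_comm,
    ← finrank_span_eq_card hPli, ← Submodule.finrank_sup_add_finrank_inf_eq,
    span_range_inf_restrictTotalDegree_eq_bot hL hPorth, finrank_bot, add_zero]

lemma surjective_evalAt_domRestrict {κ : Type*} [Finite κ]
    (hsup : restrictTotalDegree σ K (m + 1) ≤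
      Submodule.span K (Set.range P) ⊔ restrictTotalDegree σ K m)
    {x : κ → σ → K} (hx : Function.Injective x) (hzero : ∀ i k, eval (x i) (P k) = 0) :
    Function.Surjective ((evalAt x).domRestrict (restrictTotalDegree σ K m)) := by
  intro v
  obtain ⟨f, hf⟩ := exists_eval_eq hx v
  obtain ⟨q, r, -, hr, rfl⟩ := restrictTotalDegree_le_sumMulAdd hsup f.totalDegree
    ((mem_restrictTotalDegree σ _ f).mpr (by omega))
  refine ⟨⟨r, hr⟩, ?_⟩
  ext i
  simp [← hf i, hzero]

theorem card_le_finrank_of_eval_eq_zero [Finite σ]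
    (hsup : restrictTotalDegree σ K (m + 1) ≤
      Submodule.span K (Set.range P) ⊔ restrictTotalDegree σ K m)
    {x : κ → σ → K} (hx : Function.Injective x) (hzero : ∀ i k, eval (x i) (P k) = 0) :
    Fintype.card κ ≤ finrank K (restrictTotalDegree σ K m) := by
  simpa using LinearMap.finrank_le_finrank_of_surjective
    (surjective_evalAt_domRestrict hsup hx hzero)

theorem finite_setOf_eval_eq_zero [Finite σ]
    (hsup : restrictTotalDegree σ K (m + 1) ≤
      Submodule.span K (Set.range P) ⊔ restrictTotalDegree σ K m) :
    {y : σ → K | ∀ k, eval y (P k) = 0}.Finite := by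
  by_contra hinf
  obtain ⟨t, ht, hcard⟩ := Set.Infinite.exists_subset_card_eq hinf
    (finrank K (restrictTotalDegree σ K m) + 1)
  have := card_le_finrank_of_eval_eq_zero hsup (x := ((↑) : t → σ → K)) Subtype.val_injective
    fun i => ht i.2
  simp only [Fintype.card_coe] at this
  omega

theorem exists_isCubature_of_eval_eq_zero [Finite σ]
    (hsup : restrictTotalDegree σ K (m + 1) ≤
      Submodule.span K (Set.range P) ⊔ restrictTotalDegree σ K m)
    (hPorth : ∀ k, ∀ q ∈ restrictTotalDegree σ K m, L (P k * q) = 0)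
    {x : κ → σ → K} (hx : Function.Injective x) (hzero : ∀ i k, eval (x i) (P k) = 0)
    (hN : finrank K (restrictTotalDegree σ K m) = Fintype.card κ) :
    ∃ w, IsCubature L (2 * m + 1) x w := by
  classical
  set E := (evalAt x).domRestrict (restrictTotalDegree σ K m)
  have hsurj : Function.Surjective E := surjective_evalAt_domRestrict hsup hx hzero
  have hinj : Function.Injective E :=
    (LinearMap.injective_iff_surjective_of_finrank_eq_finrank (by simp [hN])).mpr hsurj
  set e := LinearEquiv.ofBijective E ⟨hinj, hsurj⟩
  set φ := L ∘ₗ (restrictTotalDegree σ K m).subtype ∘ₗ e.symm.toLinearMap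
  refine ⟨fun i => φ fun j => if i = j then 1 else 0, fun f hf => ?_⟩
  obtain ⟨q, r, hq, hr, rfl⟩ := restrictTotalDegree_le_sumMulAdd hsup m
    ((mem_restrictTotalDegree σ _ f).mpr (by omega))
  have hLr : L r = ∑ i, eval (x i) r * φ fun j => if i = j then 1 else 0 := by
    rw [show L r = φ (e ⟨r, hr⟩) by simp [φ], LinearMap.pi_apply_eq_sum_univ]
    rfl
  simp [hLr, hzero, mul_comm _ (P _), hPorth _ _ (hq _), mul_comm (eval _ r)]

theorem range_eq_setOf_eval_eq_zero_of_isCubature [Finite σ]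
    (hL : ∀ p, p ≠ 0 → L (p * p) ≠ 0)
    (hPdeg : ∀ k, P k ∈ restrictTotalDegree σ K (m + 1))
    (hPorth : ∀ k, ∀ q ∈ restrictTotalDegree σ K m, L (P k * q) = 0)
    (hsup : restrictTotalDegree σ K (m + 1) ≤
      Submodule.span K (Set.range P) ⊔ restrictTotalDegree σ K m)
    {N : ℕ} (hN : finrank K (restrictTotalDegree σ K m) = N) {x : Fin N → σ → K} {w : Fin N → K}
    (hx : Function.Injective x) (hcub : IsCubature L (2 * m + 1) x w) :
    Set.range x = {y | ∀ k, eval y (P k) = 0} := by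
  have hzero := eval_eq_zero_of_isCubature hL hPdeg hPorth (by simp [hN]) hcub
  refine (Set.range_subset_iff.mpr hzero).antisymm fun y hy => ?_
  by_contra hy_range
  have := card_le_finrank_of_eval_eq_zero hsup (Fin.cons_injective_iff.mpr ⟨hy_range, hx⟩)
    (fun i => Fin.cases hy hzero i)
  simp [hN] at this

theorem exists_isCubature_iff_ncard [Finite σ] (hL : ∀ p, p ≠ 0 → L (p * p) ≠ 0)
    (hPdeg : ∀ k, P k ∈ restrictTotalDegree σ K (m + 1))
    (hPorth : ∀ k, ∀ q ∈ restrictTotalDegree σ K m, L (P k * q) = 0)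
    (hsup : restrictTotalDegree σ K (m + 1) ≤
      Submodule.span K (Set.range P) ⊔ restrictTotalDegree σ K m)
    {N : ℕ} (hN : finrank K (restrictTotalDegree σ K m) = N) :
    (∃ (x : Fin N → σ → K) (w : Fin N → K), Function.Injective x ∧
        IsCubature L (2 * m + 1) x w) ↔
      {y | ∀ k, eval y (P k) = 0}.ncard = N := by
  constructor
  · rintro ⟨x, w, hx, hcub⟩
    rw [← range_eq_setOf_eval_eq_zero_of_isCubature hL hPdeg hPorth hsup hN hx hcub,
      Set.ncard_range_of_injective hx, Nat.card_fin]
  · intro hcard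
    have := (finite_setOf_eval_eq_zero hsup).to_subtype
    let e : {y : σ → K | ∀ k, eval y (P k) = 0} ≃ Fin N :=
      Finite.equivFinOfCardEq (by rwa [Nat.card_coe_set_eq])
    have hx : Function.Injective (Subtype.val ∘ e.symm) :=
      Subtype.val_injective.comp e.symm.injective
    obtain ⟨w, hw⟩ := exists_isCubature_of_eval_eq_zero hsup hPorth hx (fun i => (e.symm i).2)
      (by simp [hN])
    exact ⟨_, w, hx, hw⟩

end Cubature

end MvPolynomial

open MvPolynomial

noncomputable def momentFunctional (Ω : Set (ℝ × ℝ)) (W : ℝ × ℝ → ℝ)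
    (hW : ∀ f : MvPolynomial (Fin 2) ℝ, IntegrableOn (fun z => eval ![z.1, z.2] f * W z) Ω) :
    MvPolynomial (Fin 2) ℝ →ₗ[ℝ] ℝ where
  toFun f := ∫ z in Ω, eval ![z.1, z.2] f * W z
  map_add' f g := by
    simp only [map_add, add_mul]
    exact integral_add (hW f) (hW g)
  map_smul' c f := by
    simp [smul_eval, mul_assoc, integral_const_mul]

@[simp]
lemma momentFunctional_apply (Ω : Set (ℝ × ℝ)) (W : ℝ × ℝ → ℝ)
    (hW : ∀ f : MvPolynomial (Fin 2) ℝ, IntegrableOn (fun z => eval ![z.1, z.2] f * W z) Ω)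
    (f : MvPolynomial (Fin 2) ℝ) :
    momentFunctional Ω W hW f = ∫ z in Ω, eval ![z.1, z.2] f * W z := rfl

theorem stmt16_general (Ω : Set (ℝ × ℝ)) (W : ℝ × ℝ → ℝ)
    (hW_mom : ∀ f : MvPolynomial (Fin 2) ℝ,
      IntegrableOn (fun z => MvPolynomial.eval ![z.1, z.2] f * W z) Ω)
    (hW_pd : ∀ f : MvPolynomial (Fin 2) ℝ, f ≠ 0 →
      0 < ∫ z in Ω, (MvPolynomial.eval ![z.1, z.2] f) ^ 2 * W z)
    (n : ℕ) (hn : 1 ≤ n)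
    (P : Fin (n + 1) → MvPolynomial (Fin 2) ℝ)
    (hPdeg : ∀ k, (P k).totalDegree = n)
    (hPorth : ∀ k (q : MvPolynomial (Fin 2) ℝ), q.totalDegree < n →
      ∫ z in Ω, MvPolynomial.eval ![z.1, z.2] (P k) *
        MvPolynomial.eval ![z.1, z.2] q * W z = 0)
    (hPli : LinearIndependent ℝ P) :
    ((∃ (pt : Fin (n * (n + 1) / 2) → ℝ × ℝ) (lam : Fin (n * (n + 1) / 2) → ℝ),
        Function.Injective pt ∧
        ∀ f : MvPolynomial (Fin 2) ℝ, f.totalDegree ≤ 2 * n - 1 →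
          ∫ z in Ω, MvPolynomial.eval ![z.1, z.2] f * W z =
            ∑ k, lam k * MvPolynomial.eval ![(pt k).1, (pt k).2] f) ↔
      ({z : ℝ × ℝ | ∀ k, MvPolynomial.eval ![z.1, z.2] (P k) = 0}).ncard
        = n * (n + 1) / 2) ∧
    (∀ (pt : Fin (n * (n + 1) / 2) → ℝ × ℝ) (lam : Fin (n * (n + 1) / 2) → ℝ),
      Function.Injective pt →
      (∀ f : MvPolynomial (Fin 2) ℝ, f.totalDegree ≤ 2 * n - 1 →
        ∫ z in Ω, MvPolynomial.eval ![z.1, z.2] f * W z =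
          ∑ k, lam k * MvPolynomial.eval ![(pt k).1, (pt k).2] f) →
      Set.range pt = {z : ℝ × ℝ | ∀ k, MvPolynomial.eval ![z.1, z.2] (P k) = 0}) := by
  obtain ⟨m, rfl⟩ : ∃ m, n = m + 1 := ⟨n - 1, by omega⟩
  rw [show 2 * (m + 1) - 1 = 2 * m + 1 by omega]
  set L := momentFunctional Ω W hW_mom
  have hL : ∀ p, p ≠ 0 → L (p * p) ≠ 0 := fun p hp =>
    (show 0 < L (p * p) by simpa [L, sq] using hW_pd p hp).ne'
  have hPdeg' : ∀ k, P k ∈ restrictTotalDegree (Fin 2) ℝ (m + 1) :=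
    fun k => (mem_restrictTotalDegree _ _ _).mpr (hPdeg k).le
  have hPorth' : ∀ k, ∀ q ∈ restrictTotalDegree (Fin 2) ℝ m, L (P k * q) = 0 := fun k q hq => by
    rw [mem_restrictTotalDegree] at hq
    simpa [L] using hPorth k q (by omega)
  have hsup := (span_range_sup_restrictTotalDegree_eq hL hPdeg' hPorth' hPli
    (by simp [Nat.multichoose_two])).ge
  have hN := finrank_restrictTotalDegree_fin_two (R := ℝ) m
  -- `e z = ![z.1, z.2]` identifies the plane with `Fin 2 → ℝ`
  let e := (finTwoArrowEquiv ℝ).symm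
  have hzeros : {z : ℝ × ℝ | ∀ k, eval ![z.1, z.2] (P k) = 0} =
      e ⁻¹' {y | ∀ k, eval y (P k) = 0} := rfl
  have hrange : ∀ pt lam, Function.Injective pt → IsCubature L (2 * m + 1) (e ∘ pt) lam →
      Set.range pt = {z : ℝ × ℝ | ∀ k, eval ![z.1, z.2] (P k) = 0} := fun pt lam hpt hcub => by
    rw [hzeros, ← range_eq_setOf_eval_eq_zero_of_isCubature hL hPdeg' hPorth' hsup hN
      (e.injective.comp hpt) hcub, Set.range_comp, e.preimage_image]
  refine ⟨⟨fun ⟨pt, lam, hpt, hcub⟩ => ?_, fun hcard => ?_⟩, hrange⟩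
  · rw [← hrange pt lam hpt hcub, Set.ncard_range_of_injective hpt, Nat.card_fin]
  · rw [hzeros, Set.ncard_preimage_of_injective_subset_range e.injective (by simp)] at hcard
    obtain ⟨x, w, hx, hcub⟩ := (exists_isCubature_iff_ncard hL hPdeg' hPorth' hsup hN).mpr hcard
    refine ⟨e.symm ∘ x, w, e.symm.injective.comp hx, ?_⟩
    exact (show IsCubature L (2 * m + 1) (e ∘ (e.symm ∘ x)) w by
      rwa [← Function.comp_assoc, e.self_comp_symm, Function.id_comp])

/-- Characterization of Gaussian cubature rules: a Gaussian cubature rule of degree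
`2n-1` with `N = n(n+1)/2 = dim Π²_{n-1}` nodes exists if and only if the basis
`P_{0,n}, …, P_{n,n}` of `𝒱_n²` has `N` common zeros, in which case the nodes are
exactly these common zeros. -/
theorem stmt16 (Ω : Set (ℝ × ℝ)) (W : ℝ × ℝ → ℝ)
    (hW_nn : ∀ z ∈ Ω, 0 ≤ W z)
    (hW_mom : ∀ f : MvPolynomial (Fin 2) ℝ,
      IntegrableOn (fun z => MvPolynomial.eval ![z.1, z.2] f * W z) Ω)
    (hW_pd : ∀ f : MvPolynomial (Fin 2) ℝ, f ≠ 0 →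
      0 < ∫ z in Ω, (MvPolynomial.eval ![z.1, z.2] f) ^ 2 * W z)
    (n : ℕ) (hn : 1 ≤ n)
    (P : Fin (n + 1) → MvPolynomial (Fin 2) ℝ)
    (hPdeg : ∀ k, (P k).totalDegree = n)
    (hPorth : ∀ k (q : MvPolynomial (Fin 2) ℝ), q.totalDegree < n →
      ∫ z in Ω, MvPolynomial.eval ![z.1, z.2] (P k) *
        MvPolynomial.eval ![z.1, z.2] q * W z = 0)
    (hPli : LinearIndependent ℝ P) :
    ((∃ (pt : Fin (n * (n + 1) / 2) → ℝ × ℝ) (lam : Fin (n * (n + 1) / 2) → ℝ),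
        Function.Injective pt ∧
        ∀ f : MvPolynomial (Fin 2) ℝ, f.totalDegree ≤ 2 * n - 1 →
          ∫ z in Ω, MvPolynomial.eval ![z.1, z.2] f * W z =
            ∑ k, lam k * MvPolynomial.eval ![(pt k).1, (pt k).2] f) ↔
      ({z : ℝ × ℝ | ∀ k, MvPolynomial.eval ![z.1, z.2] (P k) = 0}).ncard
        = n * (n + 1) / 2) ∧
    (∀ (pt : Fin (n * (n + 1) / 2) → ℝ × ℝ) (lam : Fin (n * (n + 1) / 2) → ℝ),
      Function.Injective pt →
      (∀ f : MvPolynomial (Fin 2) ℝ, f.totalDegree ≤ 2 * n - 1 →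
        ∫ z in Ω, MvPolynomial.eval ![z.1, z.2] f * W z =
          ∑ k, lam k * MvPolynomial.eval ![(pt k).1, (pt k).2] f) →
      Set.range pt = {z : ℝ × ℝ | ∀ k, MvPolynomial.eval ![z.1, z.2] (P k) = 0}) :=
  stmt16_general Ω W hW_mom hW_pd n hn P hPdeg hPorth hPli
end

section
/- Let W be a nonnegative weight function on a domain Ω ⊂ ℝ², with finite moments of all orders and positive-definite moment functional (∫_Ω p² W > 0 for every nonzero polynomial p), which is centrally symmetric (W(−x,−y) = W(x,y) and (x,y) ∈ Ω ⟹ (−x,−y) ∈ Ω). Then every cubature rule of degree 2n−1 for ∫_Ω · W, i.e., points (x_k,y_k), 1 ≤ k ≤ N, and weights λ_k with ∫_Ω f W = Σ_{k=1}^N λ_k f(x_k,y_k) for all f ∈ Π²_{2n−1}, satisfies N ≥ dim Π²_{n−1} + ⌊n/2⌋ = n(n+1)/2 + ⌊n/2⌋. -/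
/-!
Let `V` be the space of polynomials of degree `< n` all of whose monomials have the parity of
`n - 1`, and `ℓ` a linear form vanishing at no nonzero node. The map `(p, q) ↦ ((p + ℓ q)(x_k))_k`
from `V × V` to `ℝ^N` has a kernel of dimension at most `n mod 2`. Indeed, if `p + ℓ q` vanishes
at the nodes, the rule (exact in degree `2n - 1`) gives `∫ (p + ℓ q) p W = 0`, while `ℓ q p` is
odd and integrates to `0` by central symmetry; so `∫ p² W = 0` and `p = 0`. Then `q` vanishes
at every nonzero node, and if also at the origin (automatic for even `n`, when `q` is odd) the
same argument gives `q = 0`. Hence `N ≥ 2 dim V - (n mod 2)`, and in two variables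
`2 dim V = n(n+1)/2 + ⌊n/2⌋ + (n mod 2)`.
-/

open MeasureTheory MvPolynomial Finset

namespace MeasureTheory

theorem _root_.Set.EqOn.ae_eq_restrict_of_aestronglyMeasurable {α E : Type*} [MeasurableSpace α]
    {μ : Measure α} {s : Set α} [TopologicalSpace E]
    [TopologicalSpace.MetrizableSpace E] {f g : α → E} (h : s.EqOn f g)
    (hf : AEStronglyMeasurable f (μ.restrict s)) (hg : AEStronglyMeasurable g (μ.restrict s)) :
    f =ᵐ[μ.restrict s] g :=
  (ae_restrict_iff₀ (hf.nullMeasurableSet_eq_fun hg)).2 (.of_forall h)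

theorem Measure.isNegInvariant_restrict {G : Type*} [MeasurableSpace G] [InvolutiveNeg G]
    [MeasurableNeg G] (μ : Measure G) [μ.IsNegInvariant] {s : Set G} (hs : ∀ z ∈ s, -z ∈ s) : (μ.restrict s).IsNegInvariant := by
  have hs' : MeasurableEquiv.neg G ⁻¹' s = s :=
    Set.ext fun z => ⟨fun h => neg_neg z ▸ hs _ h, hs z⟩
  constructor
  have := (MeasurableEquiv.neg G).restrict_map μ s
  rw [hs'] at this
  exact this.symm.trans (congrArg (·.restrict s) (Measure.map_neg_eq_self μ))

theorem setIntegral_eq_zero_of_odd {G E : Type*} [MeasurableSpace G] [AddGroup G] [MeasurableNeg G]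
    [NormedAddCommGroup E] [NormedSpace ℝ E]
    (μ : Measure G) [μ.IsNegInvariant] {s : Set G} (hs : ∀ z ∈ s, -z ∈ s) {g : G → E}
    (hg : AEStronglyMeasurable g (μ.restrict s)) (hodd : ∀ z ∈ s, g (-z) = -g z) :
    ∫ z in s, g z ∂μ = 0 := by
  have := μ.isNegInvariant_restrict hs
  have hcomp : (fun z => g (-z)) =ᵐ[μ.restrict s] fun z => -g z :=
    Set.EqOn.ae_eq_restrict_of_aestronglyMeasurable hodd
      (hg.comp_measurePreserving (Measure.measurePreserving_neg _)) hg.neg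
  have := integral_neg_eq_self g (μ.restrict s)
  rw [integral_congr_ae hcomp, integral_neg, neg_eq_iff_eq_neg, ← sub_eq_zero, sub_neg_eq_add,
    ← two_smul ℝ, smul_eq_zero] at this
  exact this.resolve_left two_ne_zero

end MeasureTheory

namespace MvPolynomial

variable {σ R : Type*} [CommRing R]

theorem eval_neg_of_forall_neg_one_pow_degree [Fintype σ] {f : MvPolynomial σ R} {ε : R}
    (hf : ∀ e ∈ f.support, (-1) ^ e.degree = ε) (x : σ → R) :
    eval (-x) f = ε * eval x f := by
  rw [eval_eq', eval_eq', Finset.mul_sum]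
  refine Finset.sum_congr rfl fun e he => ?_
  rw [← hf e he, Finsupp.degree_eq_sum, ← Finset.prod_pow_eq_pow_sum, mul_left_comm, ← Finset.prod_mul_distrib]
  simp only [Pi.neg_apply, neg_pow (x _)]

variable (σ R) in
noncomputable def paritySpace (n : ℕ) : Submodule R (MvPolynomial σ R) :=
  restrictSupport R {e | e.degree < n ∧ e.degree % 2 ≠ n % 2}

variable {n : ℕ} {f : MvPolynomial σ R}

theorem paritySpace_le_restrictTotalDegree :
    paritySpace σ R n ≤ restrictTotalDegree σ R (n - 1) :=
  restrictSupport_mono R fun e he => show e.degree ≤ n - 1 from Nat.le_sub_one_of_lt he.1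

theorem totalDegree_le_of_mem_paritySpace (hf : f ∈ paritySpace σ R n) :
    f.totalDegree ≤ n - 1 :=
  (mem_restrictTotalDegree _ _ _).1 (paritySpace_le_restrictTotalDegree hf)

theorem eval_neg_of_mem_paritySpace [Fintype σ] (hf : f ∈ paritySpace σ R n) (x : σ → R) :
    eval (-x) f = -(-1) ^ n * eval x f := by
  refine eval_neg_of_forall_neg_one_pow_degree (fun e he => ?_) x
  have := (hf he).2
  rw [neg_one_pow_eq_pow_mod_two, neg_one_pow_eq_pow_mod_two (n := n)]
  rcases Nat.mod_two_eq_zero_or_one n with h | h <;> rw [h] at this ⊢ <;> simp_all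

instance [Finite σ] : FiniteDimensional ℝ (paritySpace σ ℝ n) :=
  Submodule.finiteDimensional_of_le paritySpace_le_restrictTotalDegree

end MvPolynomial

def parityExponents (n : ℕ) : Finset (ℕ × ℕ) :=
  (range n ×ˢ range n).filter fun p => p.1 + p.2 < n ∧ (p.1 + p.2) % 2 ≠ n % 2

theorem mem_parityExponents {n : ℕ} {p : ℕ × ℕ} :
    p ∈ parityExponents n ↔ p.1 + p.2 < n ∧ (p.1 + p.2) % 2 ≠ n % 2 := by
  simp only [parityExponents, mem_filter, mem_product, mem_range]
  omega

theorem card_parityExponents_add_two (n : ℕ) :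
    #(parityExponents (n + 2)) = #(parityExponents n) + (n + 2) := by
  have hunion : parityExponents (n + 2) = parityExponents n ∪ antidiagonal (n + 1) := by
    ext p
    simp only [mem_union, mem_parityExponents, HasAntidiagonal.mem_antidiagonal]
    omega
  have hdisj : Disjoint (parityExponents n) (antidiagonal (n + 1)) :=
    disjoint_left.2 fun p hp hp' => by
      rw [mem_parityExponents] at hp
      rw [HasAntidiagonal.mem_antidiagonal] at hp'
      omega
  rw [hunion, card_union_of_disjoint hdisj, Nat.card_antidiagonal]

theorem two_mul_card_parityExponents (n : ℕ) :
    2 * #(parityExponents n) = n * (n + 1) / 2 + n / 2 + n % 2 := by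
  induction n using Nat.twoStepInduction with
  | zero => rfl
  | one => rfl
  | more n ih _ =>
    rw [card_parityExponents_add_two]
    have : (n + 2) * (n + 2 + 1) = n * (n + 1) + 2 * (2 * n + 3) := by ring
    omega

theorem finrank_paritySpace_fin_two (n : ℕ) :
    Module.finrank ℝ (paritySpace (Fin 2) ℝ n) = #(parityExponents n) := by
  let E : (Fin 2 →₀ ℕ) ≃ ℕ × ℕ := Finsupp.equivFunOnFinite.trans (finTwoArrowEquiv ℕ)
  have hdeg (e : Fin 2 →₀ ℕ) : e.degree = (E e).1 + (E e).2 := by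
    simp [E, Finsupp.degree_eq_sum, Fin.sum_univ_two]
  rw [paritySpace, Module.finrank_eq_nat_card_basis (basisRestrictSupport ℝ _),
    ← Nat.card_eq_finsetCard]
  exact Nat.card_congr (E.subtypeEquiv fun e => by simp [mem_parityExponents, hdeg])

theorem exists_forall_sum_mul_ne_zero {ι σ K : Type*} [Finite ι] [Fintype σ] [Field K]
    [Infinite K] (x : ι → σ → K) : ∃ a : σ → K, ∀ k, x k ≠ 0 → ∑ i, a i * x k i ≠ 0 := by
  classical
  obtain ⟨a, ha⟩ := Module.Dual.exists_forall_ne_zero_of_forall_exists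
    (fun k : {k // x k ≠ 0} => Fintype.linearCombination K (x k)) fun k => by
      obtain ⟨i, hi⟩ := Function.ne_iff.1 k.2
      exact ⟨Pi.single i 1, by simpa using hi⟩
  exact ⟨a, fun k hk => by simpa [Fintype.linearCombination_apply] using ha ⟨k, hk⟩⟩

theorem MvPolynomial.exists_odd_linear_eval_ne_zero {ι σ : Type*} [Finite ι] [Fintype σ]
    (x : ι → σ → ℝ) :
    ∃ ℓ : MvPolynomial σ ℝ, ℓ.totalDegree ≤ 1 ∧ (∀ y, eval (-y) ℓ = -eval y ℓ) ∧
      ∀ k, x k ≠ 0 → eval (x k) ℓ ≠ 0 := by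
  obtain ⟨a, ha⟩ := exists_forall_sum_mul_ne_zero x
  refine ⟨∑ i, C (a i) * X i, ?_, fun y => by simp, fun k hk => by simpa using ha k hk⟩
  refine (totalDegree_finsetSum _ _).trans (Finset.sup_le fun i _ => ?_)
  exact (totalDegree_mul _ _).trans (by simp)

section Cubature

variable {σ ι : Type*}

noncomputable def nodeMap (x : ι → σ → ℝ) (V : Submodule ℝ (MvPolynomial σ ℝ)) (ℓ : MvPolynomial σ ℝ) :
    V × V →ₗ[ℝ] ι → ℝ :=
  LinearMap.pi (fun k => (aeval (x k)).toLinearMap) ∘ₗ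
    V.subtype.coprod (LinearMap.mulLeft ℝ ℓ ∘ₗ V.subtype)

@[simp]
theorem nodeMap_apply (x : ι → σ → ℝ) (V : Submodule ℝ (MvPolynomial σ ℝ))
    (ℓ : MvPolynomial σ ℝ) (pq : V × V) (k : ι) :
    nodeMap x V ℓ pq k = eval (x k) (pq.1 + ℓ * pq.2) := by
  simp [nodeMap]

def IsPositiveDefinite (L : MvPolynomial σ ℝ →ₗ[ℝ] ℝ) : Prop :=
  ∀ f, f ≠ 0 → 0 < L (f ^ 2)

def IsCentrallySymmetric (L : MvPolynomial σ ℝ →ₗ[ℝ] ℝ) : Prop :=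
  ∀ f, (∀ y, eval (-y) f = -eval y f) → L f = 0

def IsCubatureRule [Fintype ι] (L : MvPolynomial σ ℝ →ₗ[ℝ] ℝ) (d : ℕ) (x : ι → σ → ℝ)
    (w : ι → ℝ) : Prop :=
  ∀ f : MvPolynomial σ ℝ, f.totalDegree ≤ d → L f = ∑ k, w k * eval (x k) f

variable [Fintype ι] {L : MvPolynomial σ ℝ →ₗ[ℝ] ℝ} {n : ℕ} {x : ι → σ → ℝ} {w : ι → ℝ}

theorem IsCubatureRule.eq_zero_of_eval_add_eq_zero (hL : IsCubatureRule L (2 * n - 1) x w)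
    (hpos : IsPositiveDefinite L) {u v : MvPolynomial σ ℝ} (hu : u.totalDegree ≤ n - 1)
    (hv : v.totalDegree ≤ n) (huv : L (v * u) = 0) (hx : ∀ k, eval (x k) (u + v) = 0) :
    u = 0 := by
  by_contra hu0
  have hdeg : ((u + v) * u).totalDegree ≤ 2 * n - 1 := by
    have := totalDegree_add u v
    have := totalDegree_mul (u + v) u
    omega
  have : L (u ^ 2) = 0 := calc
    L (u ^ 2) = L ((u + v) * u) - L (v * u) := by rw [← map_sub]; ring_nf
    _ = 0 := by simp [hL _ hdeg, huv, hx]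
  exact (hpos u hu0).ne' this

variable [Fintype σ] {ℓ : MvPolynomial σ ℝ}

theorem IsCubatureRule.fst_eq_zero_of_mem_ker_nodeMap (hL : IsCubatureRule L (2 * n - 1) x w)
    (hpos : IsPositiveDefinite L) (hsymm : IsCentrallySymmetric L) (hn : 1 ≤ n)
    (hℓdeg : ℓ.totalDegree ≤ 1) (hℓodd : ∀ y, eval (-y) ℓ = -eval y ℓ)
    {pq : paritySpace σ ℝ n × paritySpace σ ℝ n}
    (hpq : pq ∈ LinearMap.ker (nodeMap x (paritySpace σ ℝ n) ℓ)) :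
    pq.1 = 0 := by
  obtain ⟨⟨p, hp⟩, ⟨q, hq⟩⟩ := pq
  have hdeg : (ℓ * q).totalDegree ≤ n :=
    (totalDegree_mul _ _).trans (by have := totalDegree_le_of_mem_paritySpace hq; omega)
  have hodd : L (ℓ * q * p) = 0 := hsymm _ fun y => by
    simp only [map_mul, hℓodd, eval_neg_of_mem_paritySpace hp, eval_neg_of_mem_paritySpace hq]
    have : ((-1 : ℝ) ^ n) ^ 2 = 1 := by rw [← pow_mul, pow_mul', neg_one_sq, one_pow]
    linear_combination (-(eval y ℓ * eval y q * eval y p)) * this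
  exact Subtype.ext <| hL.eq_zero_of_eval_add_eq_zero hpos
    (totalDegree_le_of_mem_paritySpace hp) hdeg hodd fun k => by
      simpa using congrFun (LinearMap.mem_ker.1 hpq) k

theorem IsCubatureRule.eq_zero_of_mem_ker_nodeMap (hL : IsCubatureRule L (2 * n - 1) x w)
    (hpos : IsPositiveDefinite L) (hsymm : IsCentrallySymmetric L) (hn : 1 ≤ n)
    (hℓdeg : ℓ.totalDegree ≤ 1) (hℓodd : ∀ y, eval (-y) ℓ = -eval y ℓ)
    (hℓx : ∀ k, x k ≠ 0 → eval (x k) ℓ ≠ 0) {pq : paritySpace σ ℝ n × paritySpace σ ℝ n}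
    (hpq : pq ∈ LinearMap.ker (nodeMap x (paritySpace σ ℝ n) ℓ))
    (hq0 : eval 0 (pq.2 : MvPolynomial σ ℝ) = 0) :
    pq = 0 := by
  have hp := hL.fst_eq_zero_of_mem_ker_nodeMap hpos hsymm hn hℓdeg hℓodd hpq
  have hq : ∀ k, eval (x k) (pq.2 : MvPolynomial σ ℝ) = 0 := fun k => by
    by_cases hk : x k = 0
    · rwa [hk]
    · have := congrFun (LinearMap.mem_ker.1 hpq) k
      simp only [nodeMap_apply, hp, ZeroMemClass.coe_zero, zero_add, map_mul] at this
      exact (mul_eq_zero.1 this).resolve_left (hℓx k hk)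
  refine Prod.ext hp (Subtype.ext ?_)
  exact hL.eq_zero_of_eval_add_eq_zero hpos (v := 0) (totalDegree_le_of_mem_paritySpace pq.2.2)
    (by simp) (by simp) (by simpa using hq)

theorem IsCubatureRule.finrank_ker_nodeMap_le (hL : IsCubatureRule L (2 * n - 1) x w)
    (hpos : IsPositiveDefinite L) (hsymm : IsCentrallySymmetric L) (hn : 1 ≤ n)
    (hℓdeg : ℓ.totalDegree ≤ 1) (hℓodd : ∀ y, eval (-y) ℓ = -eval y ℓ)
    (hℓx : ∀ k, x k ≠ 0 → eval (x k) ℓ ≠ 0) :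
    Module.finrank ℝ (LinearMap.ker (nodeMap x (paritySpace σ ℝ n) ℓ)) ≤ n % 2 := by
  set K := LinearMap.ker (nodeMap x (paritySpace σ ℝ n) ℓ)
  have hK {pq} (hpq : pq ∈ K) := hL.eq_zero_of_mem_ker_nodeMap hpos hsymm hn hℓdeg hℓodd hℓx hpq
  rcases Nat.even_or_odd n with hev | hodd
  · rw [Nat.even_iff.1 hev, Nat.le_zero, Submodule.finrank_eq_zero, eq_bot_iff]
    refine fun pq hpq => (Submodule.mem_bot ℝ).2 (hK hpq ?_)
    have := eval_neg_of_mem_paritySpace pq.2.2 (0 : σ → ℝ)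
    rw [neg_zero, hev.neg_one_pow] at this
    linarith
  · let ψ : K →ₗ[ℝ] ℝ := (aeval 0).toLinearMap ∘ₗ (paritySpace σ ℝ n).subtype ∘ₗ
      LinearMap.snd ℝ _ _ ∘ₗ K.subtype
    have hψ : Function.Injective ψ := LinearMap.ker_eq_bot.1 <| LinearMap.ker_eq_bot'.2
      fun pq hpq => Subtype.ext (hK pq.2 (by simpa [ψ, coe_aeval_eq_eval] using hpq))
    simpa [Nat.odd_iff.1 hodd] using LinearMap.finrank_le_finrank_of_injective hψ

theorem IsCubatureRule.two_mul_finrank_paritySpace_le (hL : IsCubatureRule L (2 * n - 1) x w)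
    (hpos : IsPositiveDefinite L) (hsymm : IsCentrallySymmetric L) (hn : 1 ≤ n) :
    2 * Module.finrank ℝ (paritySpace σ ℝ n) ≤ Fintype.card ι + n % 2 := by
  obtain ⟨ℓ, hℓdeg, hℓodd, hℓx⟩ := exists_odd_linear_eval_ne_zero x
  have hrank := LinearMap.finrank_range_add_finrank_ker (nodeMap x (paritySpace σ ℝ n) ℓ)
  have hrange := Submodule.finrank_le (LinearMap.range (nodeMap x (paritySpace σ ℝ n) ℓ))
  have hker := hL.finrank_ker_nodeMap_le hpos hsymm hn hℓdeg hℓodd hℓx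
  rw [Module.finrank_prod] at hrank
  rw [Module.finrank_fintype_fun_eq_card] at hrange
  omega

end Cubature

section WeightedIntegral

noncomputable def weightedIntegral (μ : Measure (ℝ × ℝ)) (Ω : Set (ℝ × ℝ)) (W : ℝ × ℝ → ℝ)
    (hW : ∀ f : MvPolynomial (Fin 2) ℝ, IntegrableOn (fun z => eval ![z.1, z.2] f * W z) Ω μ) :
    MvPolynomial (Fin 2) ℝ →ₗ[ℝ] ℝ where
  toFun f := ∫ z in Ω, eval ![z.1, z.2] f * W z ∂μ
  map_add' f g := by simp only [map_add, add_mul]; exact integral_add (hW f) (hW g)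
  map_smul' c f := by simp only [smul_eval, mul_assoc, integral_const_mul]; rfl

variable {μ : Measure (ℝ × ℝ)} {Ω : Set (ℝ × ℝ)} {W : ℝ × ℝ → ℝ}

theorem weightedIntegral_apply
    (hW : ∀ f : MvPolynomial (Fin 2) ℝ, IntegrableOn (fun z => eval ![z.1, z.2] f * W z) Ω μ)
    (f : MvPolynomial (Fin 2) ℝ) :
    weightedIntegral μ Ω W hW f = ∫ z in Ω, eval ![z.1, z.2] f * W z ∂μ :=
  rfl

theorem isCentrallySymmetric_weightedIntegral [μ.IsNegInvariant]
    (hW : ∀ f : MvPolynomial (Fin 2) ℝ, IntegrableOn (fun z => eval ![z.1, z.2] f * W z) Ω μ)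
    (hsymm : ∀ z ∈ Ω, -z ∈ Ω ∧ W (-z) = W z) :
    IsCentrallySymmetric (weightedIntegral μ Ω W hW) := fun f hf =>
  setIntegral_eq_zero_of_odd μ (fun z hz => (hsymm z hz).1) (hW f).aestronglyMeasurable
    fun z hz => by
      have := hf ![z.1, z.2]
      simp only [Matrix.neg_cons, Matrix.neg_empty] at this
      simp [this, (hsymm z hz).2]

end WeightedIntegral

theorem stmt18_general (Ω : Set (ℝ × ℝ)) (W : ℝ × ℝ → ℝ)
    (hW_mom : ∀ f : MvPolynomial (Fin 2) ℝ,
      IntegrableOn (fun z => MvPolynomial.eval ![z.1, z.2] f * W z) Ω)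
    (hW_pd : ∀ f : MvPolynomial (Fin 2) ℝ, f ≠ 0 →
      0 < ∫ z in Ω, (MvPolynomial.eval ![z.1, z.2] f) ^ 2 * W z)
    (hW_sym : ∀ z : ℝ × ℝ, z ∈ Ω → -z ∈ Ω ∧ W (-z) = W z)
    (n : ℕ) (hn : 1 ≤ n)
    (N : ℕ) (pt : Fin N → ℝ × ℝ) (lam : Fin N → ℝ)
    (hcub : ∀ f : MvPolynomial (Fin 2) ℝ, f.totalDegree ≤ 2 * n - 1 →
      ∫ z in Ω, MvPolynomial.eval ![z.1, z.2] f * W z =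
        ∑ k, lam k * MvPolynomial.eval ![(pt k).1, (pt k).2] f) :
    n * (n + 1) / 2 + n / 2 ≤ N := by
  set L := weightedIntegral volume Ω W hW_mom
  have hpos : IsPositiveDefinite L := fun f hf => by
    simpa [L, weightedIntegral_apply] using hW_pd f hf
  have hL : IsCubatureRule L (2 * n - 1) (fun k => ![(pt k).1, (pt k).2]) lam := hcub
  have hbound := hL.two_mul_finrank_paritySpace_le hpos
    (isCentrallySymmetric_weightedIntegral hW_mom hW_sym) hn
  rw [Fintype.card_fin, finrank_paritySpace_fin_two] at hbound
  have := two_mul_card_parityExponents n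
  omega

/-- Möller's lower bound: for a centrally symmetric weight `W`, every cubature rule of
degree `2n-1` has at least `dim Π²_{n-1} + ⌊n/2⌋ = n(n+1)/2 + ⌊n/2⌋` nodes. -/
theorem stmt18 (Ω : Set (ℝ × ℝ)) (W : ℝ × ℝ → ℝ)
    (hW_nn : ∀ z ∈ Ω, 0 ≤ W z)
    (hW_mom : ∀ f : MvPolynomial (Fin 2) ℝ,
      IntegrableOn (fun z => MvPolynomial.eval ![z.1, z.2] f * W z) Ω)
    (hW_pd : ∀ f : MvPolynomial (Fin 2) ℝ, f ≠ 0 →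
      0 < ∫ z in Ω, (MvPolynomial.eval ![z.1, z.2] f) ^ 2 * W z)
    (hW_sym : ∀ z : ℝ × ℝ, z ∈ Ω → -z ∈ Ω ∧ W (-z) = W z)
    (n : ℕ) (hn : 1 ≤ n)
    (N : ℕ) (pt : Fin N → ℝ × ℝ) (lam : Fin N → ℝ)
    (hpt : Function.Injective pt)
    (hcub : ∀ f : MvPolynomial (Fin 2) ℝ, f.totalDegree ≤ 2 * n - 1 →
      ∫ z in Ω, MvPolynomial.eval ![z.1, z.2] f * W z =
        ∑ k, lam k * MvPolynomial.eval ![(pt k).1, (pt k).2] f) :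
    n * (n + 1) / 2 + n / 2 ≤ N :=
  stmt18_general Ω W hW_mom hW_pd hW_sym n hn N pt lam hcub
end
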